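/- Let g = ∑ S_n g^n be the noncommutative Lagrange series and let K = g(−A)^{-1}, i.e., the inverse of the image of g under the involution S_n(A) ↦ (−1)^n Λ_n interpreted as the alphabet −A. Then K satisfies σ_1 = ∑_{n≥0} K_n σ_1^n, where σ_1 = ∑_{n≥0} S_n and K_n is the degree-n component of K; equivalently, K = g^{(−1)} solves g^{(−1)} = ∑_{n≥0} S_n (g^{(−1)})^{−n}. -/

import Mathlib

noncomputable section

/-- The free associative algebra over `ℚ` on the noncommuting generators `S_1, S_2, …`
(the letter `n` stands for `S_n`; the letter `0` is never used). -/
abbrev NSym : Type := FreeAlgebra ℚ ℕ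

/-- The series `S_n t^n` (with `S_0 = 1`), so that the completed algebra of noncommutative
symmetric functions graded by `deg S_n = n` is modelled by power series whose `n`-th
coefficient is the degree-`n` component. -/
def S (n : ℕ) : PowerSeries NSym :=
  if n = 0 then 1 else PowerSeries.monomial n (FreeAlgebra.ι ℚ n)

/-- The identification of the free algebra with the monoid algebra of the free monoid,
giving access to the basis of words `S^I = S_{i_1} ⋯ S_{i_r}`. -/
def toMA : NSym ≃ₐ[ℚ] MonoidAlgebra ℚ (FreeMonoid ℕ) :=
  FreeAlgebra.equivMonoidAlgebraFreeMonoid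

/-- The coefficient of the word `S^I` in an element of the free algebra. -/
def wcoeff (x : NSym) (I : List ℕ) : ℚ := (toMA x).coeff (FreeMonoid.ofList I)

/-- The operator `S_k^{-1}`: it sends the word `S^{i_1 ⋯ i_r}` to `S^{i_1 ⋯ i_{r-1}}` if
`i_r = k`, and to `0` otherwise (in particular scalars are sent to `0`). -/
def Sinv (k : ℕ) (x : NSym) : NSym :=
  toMA.symm (Finsupp.sum (toMA x).coeff fun w c =>
    if (FreeMonoid.toList w).getLast? = some k then
      (MonoidAlgebra.single (FreeMonoid.ofList ((FreeMonoid.toList w).dropLast)) c :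
        MonoidAlgebra ℚ (FreeMonoid ℕ))
    else 0)

/-- `σ_1 = ∑_{n≥0} S_n`. -/
def sigma1 : PowerSeries NSym :=
  PowerSeries.mk fun n => if n = 0 then 1 else FreeAlgebra.ι ℚ n

/-- The series `λ(-t) = ∑_n (-1)^n S_n t^n`, whose inverse defines the elementary functions
`Λ_n`. -/
def altS : PowerSeries NSym :=
  PowerSeries.mk fun n => ((-1 : ℚ) ^ n) • (if n = 0 then (1 : NSym) else FreeAlgebra.ι ℚ n)

namespace FreeCumulantsAux

open Finset PowerSeries

local notation "cc" => PowerSeries.coeff (R := NSym)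

lemma cmul (φ ψ : PowerSeries NSym) (n : ℕ) :
    cc n (φ * ψ) = ∑ i ∈ range (n + 1), cc i φ * cc (n - i) ψ := by
  rw [PowerSeries.coeff_mul, Finset.Nat.sum_antidiagonal_eq_sum_range_succ_mk]

lemma tri {M : Type*} [AddCommMonoid M] (m : ℕ) (F : ℕ → ℕ → M) :
    ∑ i ∈ range (m+1), ∑ a ∈ range (i+1), F a i
      = ∑ a ∈ range (m+1), ∑ r ∈ range (m - a + 1), F a (a + r) := by
  have h : ∑ i ∈ range (m+1), ∑ a ∈ range (i+1), F a i
      = ∑ a ∈ range (m+1), ∑ i ∈ Ico a (m+1), F a i := by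
    refine Finset.sum_comm' ?_
    intro i a
    simp only [mem_range, mem_Ico]
    omega
  rw [h]
  refine Finset.sum_congr rfl fun a ha => ?_
  rw [Finset.sum_Ico_eq_sum_range, show m + 1 - a = m - a + 1 from by
    (have := mem_range.mp ha; omega)]

lemma coeff_mono_mul (k m : ℕ) (hkm : k ≤ m) (a : NSym) (φ : PowerSeries NSym) :
    cc m (PowerSeries.monomial (R := NSym) k a * φ) = a * cc (m - k) φ := by
  rw [cmul]
  simp only [PowerSeries.coeff_monomial, ite_mul, zero_mul]
  rw [Finset.sum_ite_eq' (range (m+1)) k (fun i => a * cc (m - i) φ)]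
  rw [if_pos (mem_range.mpr (by omega))]

lemma powexp (L f : PowerSeries NSym)
    (hf : ∀ m, cc m f = ∑ a ∈ range (m+1), cc a L * cc (m-a) (f^a))
    (b m : ℕ) :
    cc m (f ^ (b+1)) = ∑ a ∈ range (m+1), cc a L * cc (m-a) (f^(a+b)) := by
  rw [pow_succ', cmul]
  calc ∑ i ∈ range (m+1), cc i f * cc (m-i) (f^b)
      = ∑ i ∈ range (m+1), ∑ a ∈ range (i+1),
          cc a L * cc (i-a) (f^a) * cc (m-i) (f^b) := by
        refine Finset.sum_congr rfl fun i _ => ?_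
        rw [hf i, Finset.sum_mul]
    _ = ∑ a ∈ range (m+1), ∑ r ∈ range (m - a + 1),
          cc a L * cc ((a+r)-a) (f^a) * cc (m-(a+r)) (f^b) :=
        tri m fun a i => cc a L * cc (i-a) (f^a) * cc (m-i) (f^b)
    _ = ∑ a ∈ range (m+1), cc a L * cc (m-a) (f^(a+b)) := by
        refine Finset.sum_congr rfl fun a ha => ?_
        rw [pow_add, cmul, Finset.mul_sum]
        refine Finset.sum_congr rfl fun r hr => ?_
        rw [show a + r - a = r from by omega, show m - (a+r) = m - a - r from by omega,
          mul_assoc]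

/-- `Qc f σ b n` is the `n`-th coefficient of `(∑_r (f^b)_r t^r σ^r) ⬝ σ^b`. -/
def Qc (f σ : PowerSeries NSym) (b n : ℕ) : NSym :=
  ∑ r ∈ range (n+1), cc r (f^b) * cc (n-r) (σ^(r+b))

/-- `Qp f σ b n` is the `n`-th coefficient of `(∑_r (f^b)_r t^r σ^r) ⬝ σ^(b+1)`. -/
def Qp (f σ : PowerSeries NSym) (b n : ℕ) : NSym :=
  ∑ r ∈ range (n+1), cc r (f^b) * cc (n-r) (σ^(r+b+1))

lemma Qp_eq (f σ : PowerSeries NSym) (b n : ℕ) :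
    Qp f σ b n = ∑ j ∈ range (n+1), Qc f σ b j * cc (n-j) σ := by
  symm
  calc ∑ j ∈ range (n+1), Qc f σ b j * cc (n-j) σ
      = ∑ j ∈ range (n+1), ∑ r ∈ range (j+1),
          cc r (f^b) * cc (j-r) (σ^(r+b)) * cc (n-j) σ := by
        refine Finset.sum_congr rfl fun j _ => ?_
        rw [Qc, Finset.sum_mul]
    _ = ∑ r ∈ range (n+1), ∑ s ∈ range (n - r + 1),
          cc r (f^b) * cc ((r+s)-r) (σ^(r+b)) * cc (n-(r+s)) σ :=
        tri n fun r j => cc r (f^b) * cc (j-r) (σ^(r+b)) * cc (n-j) σ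
    _ = Qp f σ b n := by
        rw [Qp]
        refine Finset.sum_congr rfl fun r hr => ?_
        rw [show σ^(r+b+1) = σ^(r+b) * σ from pow_succ σ (r+b), cmul, Finset.mul_sum]
        refine Finset.sum_congr rfl fun s hs => ?_
        rw [show r + s - r = s from by omega, show n - (r+s) = n - r - s from by omega,
          mul_assoc]

/-- The key Lagrange-type lemma: if `f = ∑_a L_a t^a f^a` with `L σ = 1`, then for every `b`
the series `(∑_r (f^b)_r t^r σ^r) σ^b` equals `1`. -/
lemma key (L f σ : PowerSeries NSym)
    (hσ0 : cc 0 σ = 1) (hL0 : cc 0 L = 1)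
    (hLσ : L * σ = 1)
    (hf : ∀ m, cc m f = ∑ a ∈ range (m+1), cc a L * cc (m-a) (f^a)) :
    ∀ n b, Qc f σ b n = if n = 0 then 1 else 0 := by
  intro n
  induction n using Nat.strong_induction_on with
  | _ n IH =>
  intro b
  induction b with
  | zero =>
      rw [Qc]
      simp only [pow_zero, PowerSeries.coeff_one, ite_mul, one_mul, zero_mul]
      rw [Finset.sum_ite_eq' (range (n+1)) 0 (fun r => cc (n-r) (σ^(r+0)))]
      simp [PowerSeries.coeff_one]
  | succ b IHb =>
      have e2 : ∀ m', m' < n → ∀ c, Qp f σ c m' = cc m' σ := by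
        intro m' hm' c
        rw [Qp_eq]
        calc ∑ j ∈ range (m'+1), Qc f σ c j * cc (m'-j) σ
            = ∑ j ∈ range (m'+1), (if j = 0 then 1 else 0) * cc (m'-j) σ := by
              refine Finset.sum_congr rfl fun j hj => ?_
              rw [IH j (by have := mem_range.mp hj; omega) c]
          _ = cc m' σ := by
              simp only [ite_mul, one_mul, zero_mul]
              rw [Finset.sum_ite_eq' (range (m'+1)) 0 (fun j => cc (m'-j) σ)]
              simp
      have e3 : Qp f σ b n = (if n = 0 then 1 else 0) + (if n = 0 then 0 else cc n σ) := by
        rw [Qp_eq, Finset.sum_range_succ]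
        have h4 : ∑ j ∈ range n, Qc f σ b j * cc (n-j) σ
            = (if n = 0 then 0 else cc n σ) := by
          calc ∑ j ∈ range n, Qc f σ b j * cc (n-j) σ
              = ∑ j ∈ range n, (if j = 0 then 1 else 0) * cc (n-j) σ := by
                refine Finset.sum_congr rfl fun j hj => ?_
                rw [IH j (mem_range.mp hj) b]
            _ = _ := by
                simp only [ite_mul, one_mul, zero_mul]
                rw [Finset.sum_ite_eq' (range n) 0 (fun j => cc (n-j) σ)]
                rcases eq_or_ne n 0 with h | h
                · simp [h]
                · rw [if_pos (mem_range.mpr (Nat.pos_of_ne_zero h)), if_neg h, Nat.sub_zero]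
        rw [h4, Nat.sub_self, hσ0, mul_one, IHb]
        exact add_comm _ _
      have e1 : Qc f σ (b+1) n = ∑ a ∈ range (n+1), cc a L * Qp f σ (a+b) (n-a) := by
        rw [Qc]
        calc ∑ r ∈ range (n+1), cc r (f^(b+1)) * cc (n-r) (σ^(r+(b+1)))
            = ∑ r ∈ range (n+1), ∑ a ∈ range (r+1),
                cc a L * cc (r-a) (f^(a+b)) * cc (n-r) (σ^(r+(b+1))) := by
              refine Finset.sum_congr rfl fun r _ => ?_
              rw [powexp L f hf b r, Finset.sum_mul]
          _ = ∑ a ∈ range (n+1), ∑ s ∈ range (n - a + 1),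
                cc a L * cc ((a+s)-a) (f^(a+b)) * cc (n-(a+s)) (σ^((a+s)+(b+1))) :=
              tri n fun a r => cc a L * cc (r-a) (f^(a+b)) * cc (n-r) (σ^(r+(b+1)))
          _ = ∑ a ∈ range (n+1), cc a L * Qp f σ (a+b) (n-a) := by
              refine Finset.sum_congr rfl fun a ha => ?_
              rw [Qp, Finset.mul_sum]
              refine Finset.sum_congr rfl fun s hs => ?_
              rw [show a + s - a = s from by omega, show n - (a+s) = n - a - s from by omega,
                show (a+s)+(b+1) = s+(a+b)+1 from by omega, mul_assoc]
      rw [e1, Finset.sum_range_succ']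
      have e6 : ∑ i ∈ range n, cc (i+1) L * Qp f σ (i+1+b) (n-(i+1))
          = ∑ i ∈ range n, cc (i+1) L * cc (n-(i+1)) σ := by
        refine Finset.sum_congr rfl fun i hi => ?_
        rw [e2 (n-(i+1)) (by have := mem_range.mp hi; omega) (i+1+b)]
      have e7 : ∑ i ∈ range n, cc (i+1) L * cc (n-(i+1)) σ = cc n (L * σ) - cc n σ := by
        have hc := cmul L σ n
        rw [Finset.sum_range_succ', hL0, one_mul, Nat.sub_zero] at hc
        exact eq_sub_of_add_eq hc.symm
      rw [e6, e7, hL0, one_mul, Nat.zero_add, Nat.sub_zero, e3, hLσ, PowerSeries.coeff_one]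
      rcases eq_or_ne n 0 with h | h
      · subst h
        rw [hσ0]
        simp
      · simp [h]

lemma halt (n : ℕ) : ((-1 : ℚ) ^ n) • cc n altS = cc n sigma1 := by
  rw [altS, sigma1, PowerSeries.coeff_mk, PowerSeries.coeff_mk, smul_smul, ← mul_pow,
    neg_mul_neg, one_mul, one_pow, one_smul]

lemma hsig (n : ℕ) : cc n sigma1 = if n = 0 then 1 else FreeAlgebra.ι ℚ n := by
  rw [sigma1, PowerSeries.coeff_mk]

lemma hLsigma (lam : PowerSeries NSym) (h1 : lam * altS = 1) :
    (PowerSeries.mk fun n => ((-1 : ℚ) ^ n) • cc n lam) * sigma1 = 1 := by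
  ext n
  rw [cmul]
  have hterm : ∀ i ∈ range (n+1),
      cc i (PowerSeries.mk fun k => ((-1 : ℚ) ^ k) • cc k lam) * cc (n-i) sigma1
        = ((-1 : ℚ) ^ n) • (cc i lam * cc (n-i) altS) := by
    intro i hi
    rw [PowerSeries.coeff_mk, ← halt (n-i), smul_mul_assoc, mul_smul_comm, smul_smul,
      ← pow_add, show i + (n - i) = n from by (have := mem_range.mp hi; omega)]
  rw [Finset.sum_congr rfl hterm, ← Finset.smul_sum, ← cmul, h1, PowerSeries.coeff_one]
  rcases eq_or_ne n 0 with h | h <;> simp [h]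

lemma hsigmaL (lam : PowerSeries NSym) (h2 : altS * lam = 1) :
    sigma1 * (PowerSeries.mk fun n => ((-1 : ℚ) ^ n) • cc n lam) = 1 := by
  ext n
  rw [cmul]
  have hterm : ∀ i ∈ range (n+1),
      cc i sigma1 * cc (n-i) (PowerSeries.mk fun k => ((-1 : ℚ) ^ k) • cc k lam)
        = ((-1 : ℚ) ^ n) • (cc i altS * cc (n-i) lam) := by
    intro i hi
    rw [PowerSeries.coeff_mk, ← halt i, smul_mul_assoc, mul_smul_comm, smul_smul,
      ← pow_add, show i + (n - i) = n from by (have := mem_range.mp hi; omega)]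
  rw [Finset.sum_congr rfl hterm, ← Finset.smul_sum, ← cmul, h2, PowerSeries.coeff_one]
  rcases eq_or_ne n 0 with h | h <;> simp [h]

lemma S_eq (n : ℕ) : S n = PowerSeries.monomial (R := NSym) n (cc n sigma1) := by
  rw [S, hsig]
  rcases eq_or_ne n 0 with h | h
  · subst h; simp
  · rw [if_neg h, if_neg h]

end FreeCumulantsAux

open Finset PowerSeries FreeCumulantsAux

local notation "cc" => PowerSeries.coeff (R := NSym)

/-- Let `g = ∑ S_n g^n` be the noncommutative Lagrange series, `Λ_n` the
elementary functions (coefficients of the inverse of `∑ (-1)^n S_n t^n`), `g(-A)` the image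
of `g` under the alphabet `-A` (so `g(-A) = ∑_n (-1)^n Λ_n t^n g(-A)^n`, as `S_n(-A) =
(-1)^n Λ_n`), and `K = g(-A)^{-1}`.  Then `K` is the series of free cumulants:
`σ_1 = ∑_{n≥0} K_n σ_1^n`, and `K = g⁽⁻¹⁾` solves `K = ∑_{n≥0} S_n K^{-n}`
(i.e. `K = ∑_n S_n g(-A)^n`). -/
theorem free_cumulants_lagrange
    (g lam gA K : PowerSeries NSym)
    (hg : ∀ m : ℕ, PowerSeries.coeff m g =
      ∑ n ∈ Finset.range (m + 1), PowerSeries.coeff m (S n * g ^ n))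
    (hlam : lam * altS = 1 ∧ altS * lam = 1)
    (hgA : ∀ m : ℕ, PowerSeries.coeff m gA =
      ∑ n ∈ Finset.range (m + 1),
        PowerSeries.coeff m
          (PowerSeries.monomial n
            (((-1 : ℚ) ^ n) • PowerSeries.coeff n lam) * gA ^ n))
    (hK : gA * K = 1 ∧ K * gA = 1) :
    (∀ m : ℕ, PowerSeries.coeff m K =
      ∑ n ∈ Finset.range (m + 1), PowerSeries.coeff m (S n * gA ^ n)) ∧
    (∀ m : ℕ, PowerSeries.coeff m sigma1 =
      ∑ n ∈ Finset.range (m + 1),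
        PowerSeries.coeff m
          (PowerSeries.monomial n (PowerSeries.coeff n K) * sigma1 ^ n)) := by
  obtain ⟨hlam1, hlam2⟩ := hlam
  obtain ⟨hK1, hK2⟩ := hK
  set L : PowerSeries NSym := PowerSeries.mk fun n => ((-1 : ℚ) ^ n) • cc n lam with hLdef
  have hLσ : L * sigma1 = 1 := by rw [hLdef]; exact hLsigma lam hlam1
  have hσL : sigma1 * L = 1 := by rw [hLdef]; exact hsigmaL lam hlam2
  have hσ0 : cc 0 sigma1 = 1 := by rw [hsig]; simp
  have hL0 : cc 0 L = 1 := by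
    have h := congrArg (PowerSeries.constantCoeff (R := NSym)) hLσ
    rw [map_mul, map_one] at h
    have h2 : (PowerSeries.constantCoeff (R := NSym)) sigma1 = 1 := by
      rw [← PowerSeries.coeff_zero_eq_constantCoeff_apply]; exact hσ0
    rw [h2, mul_one] at h
    rw [PowerSeries.coeff_zero_eq_constantCoeff_apply]; exact h
  have hf : ∀ m, cc m gA = ∑ a ∈ range (m+1), cc a L * cc (m-a) (gA^a) := by
    intro m
    rw [hgA m]
    refine Finset.sum_congr rfl fun a ha => ?_
    rw [coeff_mono_mul a m (by have := mem_range.mp ha; omega), hLdef, PowerSeries.coeff_mk]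
  have hQ : ∀ n b, Qc gA sigma1 b n = if n = 0 then 1 else 0 :=
    key L gA sigma1 hσ0 hL0 hLσ hf
  set R : PowerSeries NSym :=
    PowerSeries.mk fun m => ∑ a ∈ range (m+1), cc a sigma1 * cc (m-a) (gA^a) with hRdef
  have hRf : R * gA = 1 := by
    ext m
    rw [cmul]
    calc ∑ j ∈ range (m+1), cc j R * cc (m-j) gA
        = ∑ j ∈ range (m+1), ∑ a ∈ range (j+1),
            cc a sigma1 * cc (j-a) (gA^a) * cc (m-j) gA := by
          refine Finset.sum_congr rfl fun j _ => ?_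
          rw [hRdef, PowerSeries.coeff_mk, Finset.sum_mul]
      _ = ∑ a ∈ range (m+1), ∑ r ∈ range (m - a + 1),
            cc a sigma1 * cc ((a+r)-a) (gA^a) * cc (m-(a+r)) gA :=
          tri m fun a j => cc a sigma1 * cc (j-a) (gA^a) * cc (m-j) gA
      _ = ∑ a ∈ range (m+1), cc a sigma1 * cc (m-a) (gA^(a+1)) := by
          refine Finset.sum_congr rfl fun a ha => ?_
          rw [pow_succ, cmul, Finset.mul_sum]
          refine Finset.sum_congr rfl fun r hr => ?_
          rw [show a + r - a = r from by omega, show m - (a+r) = m - a - r from by omega,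
            mul_assoc]
      _ = ∑ a ∈ range (m+1), ∑ c ∈ range (m - a + 1),
            cc a sigma1 * (cc c L * cc ((m-a)-c) (gA^(c+a))) := by
          refine Finset.sum_congr rfl fun a ha => ?_
          rw [powexp L gA hf a (m-a), Finset.mul_sum]
      _ = ∑ a ∈ range (m+1), ∑ r ∈ range (m - a + 1),
            cc a sigma1 * (cc ((a+r)-a) L * cc (m-(a+r)) (gA^(a+r))) := by
          refine Finset.sum_congr rfl fun a ha => Finset.sum_congr rfl fun r hr => ?_
          rw [show (a+r)-a = r from by omega, show m-(a+r) = m - a - r from by omega,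
            show a + r = r + a from by omega]
      _ = ∑ d ∈ range (m+1), ∑ a ∈ range (d+1),
            cc a sigma1 * (cc (d-a) L * cc (m-d) (gA^d)) :=
          (tri m fun a d => cc a sigma1 * (cc (d-a) L * cc (m-d) (gA^d))).symm
      _ = ∑ d ∈ range (m+1), cc d (sigma1 * L) * cc (m-d) (gA^d) := by
          refine Finset.sum_congr rfl fun d hd => ?_
          rw [cmul, Finset.sum_mul]
          refine Finset.sum_congr rfl fun a ha => ?_
          exact (mul_assoc _ _ _).symm
      _ = cc m 1 := by
          rw [hσL]
          simp only [PowerSeries.coeff_one, ite_mul, one_mul, zero_mul]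
          rw [Finset.sum_ite_eq' (range (m+1)) 0 (fun d => cc (m-d) (gA^d))]
          simp [PowerSeries.coeff_one]
  have hRK : R = K := by
    calc R = R * (gA * K) := by rw [hK1, mul_one]
      _ = (R * gA) * K := (mul_assoc _ _ _).symm
      _ = K := by rw [hRf, one_mul]
  have concl1 : ∀ m : ℕ, cc m K = ∑ n ∈ range (m+1), cc m (S n * gA ^ n) := by
    intro m
    rw [← hRK, hRdef, PowerSeries.coeff_mk]
    refine Finset.sum_congr rfl fun a ha => ?_
    rw [S_eq, coeff_mono_mul a m (by have := mem_range.mp ha; omega)]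
  refine ⟨concl1, ?_⟩
  intro m
  symm
  calc ∑ n ∈ range (m+1), cc m (PowerSeries.monomial (R := NSym) n (cc n K) * sigma1 ^ n)
      = ∑ n ∈ range (m+1), ∑ a ∈ range (n+1),
          cc a sigma1 * cc (n-a) (gA^a) * cc (m-n) (sigma1^n) := by
        refine Finset.sum_congr rfl fun n hn => ?_
        rw [coeff_mono_mul n m (by have := mem_range.mp hn; omega), ← hRK, hRdef,
          PowerSeries.coeff_mk, Finset.sum_mul]
    _ = ∑ a ∈ range (m+1), ∑ r ∈ range (m - a + 1),
          cc a sigma1 * cc ((a+r)-a) (gA^a) * cc (m-(a+r)) (sigma1^(a+r)) :=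
        tri m fun a n => cc a sigma1 * cc (n-a) (gA^a) * cc (m-n) (sigma1^n)
    _ = ∑ a ∈ range (m+1), cc a sigma1 * Qc gA sigma1 a (m-a) := by
        refine Finset.sum_congr rfl fun a ha => ?_
        rw [Qc, Finset.mul_sum]
        refine Finset.sum_congr rfl fun r hr => ?_
        rw [show (a+r)-a = r from by omega, show m-(a+r) = m - a - r from by omega,
          show a + r = r + a from by omega, mul_assoc]
    _ = ∑ a ∈ range (m+1), (if a = m then cc a sigma1 else 0) := by
        refine Finset.sum_congr rfl fun a ha => ?_
        rw [hQ (m-a) a,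
          show ((if m - a = 0 then (1:NSym) else 0)) = (if a = m then (1:NSym) else 0) from by
            · have := mem_range.mp ha
              rcases eq_or_ne a m with h | h
              · simp [h]
              · rw [if_neg h, if_neg (by omega)],
          mul_ite, mul_one, mul_zero]
    _ = cc m sigma1 := by
        rw [Finset.sum_ite_eq' (range (m+1)) m (fun a => cc a sigma1)]
        rw [if_pos (mem_range.mpr (by omega))]

end
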